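/- arXiv:math/0610625 — 2 statements merged into one kernel-verified Lean document; each statement's English description precedes it below -/
import Mathlib

section
/- For fixed t > 0, define Ψ_ε(t) = 1 - Φ(-√(2t) - ε/√(2t)) - e^{-2ε} Φ(√(2t) - ε/√(2t)) for ε ≥ 0, where Φ is the standard normal CDF. Then ε ↦ Ψ_ε(t) is nondecreasing in ε. -/
open MeasureTheory Real

/-- The standard normal cumulative distribution function. -/
noncomputable def Phi (x : ℝ) : ℝ := ∫ y in Set.Iic x, Real.exp (-y ^ 2 / 2) / Real.sqrt (2 * Real.pi)

/-- `Psi ε t` is the probability that a pair of left-right coalescing Brownian motions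
started at distance `ε` apart has not met by time `t`. -/
noncomputable def Psi (ε t : ℝ) : ℝ :=
  1 - Phi (-Real.sqrt (2 * t) - ε / Real.sqrt (2 * t))
    - Real.exp (-2 * ε) * Phi (Real.sqrt (2 * t) - ε / Real.sqrt (2 * t))

/-!
Both arguments `±√(2t) - ε/√(2t)` of `Φ` decrease with `ε`, as does `e^{-2ε}`. Since `Φ` is a
nonnegative nondecreasing function (it is the Gaussian CDF), both subtracted terms of `Ψ_ε(t)`
are nonincreasing in `ε`.
-/

open ProbabilityTheory

theorem Phi_eq_cdf_gaussianReal (x : ℝ) : Phi x = cdf (gaussianReal 0 1) x := by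
  have hpdf : ∀ y, gaussianPDFReal 0 1 y = Real.exp (-y ^ 2 / 2) / Real.sqrt (2 * Real.pi) := by
    intro y
    simp [gaussianPDFReal, div_eq_inv_mul]
  rw [cdf_eq_real, measureReal_def, gaussianReal_apply_eq_integral 0 one_ne_zero,
    ENNReal.toReal_ofReal (setIntegral_nonneg measurableSet_Iic
      fun y _ => gaussianPDFReal_nonneg 0 1 y)]
  simp only [Phi, hpdf]

theorem Phi_nonneg (x : ℝ) : 0 ≤ Phi x :=
  Phi_eq_cdf_gaussianReal x ▸ cdf_nonneg _ x

theorem monotone_Phi : Monotone Phi := by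
  simpa only [funext Phi_eq_cdf_gaussianReal] using monotone_cdf (gaussianReal 0 1)

theorem antitone_Phi_sub_div (c : ℝ) {s : ℝ} (hs : 0 ≤ s) :
    Antitone fun ε : ℝ => Phi (c - ε / s) :=
  monotone_Phi.comp_antitone fun _ _ hab => sub_le_sub_left (div_le_div_of_nonneg_right hab hs) c

theorem monotone_Psi (t : ℝ) : Monotone fun ε : ℝ => Psi ε t := by
  intro a b hab
  have hs : 0 ≤ Real.sqrt (2 * t) := Real.sqrt_nonneg _
  have hexp : Real.exp (-2 * b) ≤ Real.exp (-2 * a) := Real.exp_le_exp.2 (by linarith)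
  have hfirst := antitone_Phi_sub_div (-Real.sqrt (2 * t)) hs hab
  have hsecond := mul_le_mul hexp (antitone_Phi_sub_div (Real.sqrt (2 * t)) hs hab)
    (Phi_nonneg _) (Real.exp_pos _).le
  simp only [Psi]
  linarith

/-- For fixed `t > 0`, the non-collision probability `ε ↦ Psi ε t` is nondecreasing in `ε ≥ 0`. -/
theorem Psi_monotone_in_eps : ∀ t : ℝ, 0 < t →
    MonotoneOn (fun ε : ℝ => Psi ε t) (Set.Ici 0) :=
  fun t _ => (monotone_Psi t).monotoneOn _
end

section
/- For fixed ε ≥ 0, the function t ↦ Ψ_ε(t) := 1 - Φ(-√(2t) - ε/√(2t)) - e^{-2ε} Φ(√(2t) - ε/√(2t)) is nonincreasing on (0, ∞), where Φ is the standard normal CDF. -/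
/-!
Substitute `s = √(2t)`, which is increasing in `t`. With `u = -s - ε/s` and `v = s - ε/s` one has
`u² - v² = 4ε`, so the Gaussian densities satisfy `φ(u) = e^{-2ε} φ(v)`. Hence the two terms of the
`s`-derivative of `1 - Φ(u) - e^{-2ε} Φ(v)` combine to `-(2ε/s²) φ(u) ≤ 0`.
-/

open MeasureTheory Real

open Set ProbabilityTheory

noncomputable def phi (x : ℝ) : ℝ := exp (-x ^ 2 / 2) / √(2 * π)

lemma phi_eq_gaussianPDFReal : phi = gaussianPDFReal 0 1 := by
  ext x
  simp [phi, gaussianPDFReal, div_eq_inv_mul]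

lemma continuous_phi : Continuous phi := by
  unfold phi
  fun_prop

lemma integrable_phi : Integrable phi :=
  phi_eq_gaussianPDFReal ▸ integrable_gaussianPDFReal 0 1

lemma hasDerivAt_integral_Iic {E : Type*} [NormedAddCommGroup E] [NormedSpace ℝ E]
    [CompleteSpace E] {f : ℝ → E} {x : ℝ} (hf : Integrable f) (hfx : ContinuousAt f x) :
    HasDerivAt (fun b ↦ ∫ y in Iic b, f y) (f x) x := by
  have hsplit : (fun b ↦ ∫ y in Iic b, f y) = fun b ↦ (∫ y in Iic 0, f y) + ∫ y in (0 : ℝ)..b, f y := by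
    ext b
    rw [← intervalIntegral.integral_Iic_sub_Iic hf.integrableOn hf.integrableOn, add_sub_cancel]
  rw [hsplit]
  exact (intervalIntegral.integral_hasDerivAt_right hf.intervalIntegrable
    (hf.aestronglyMeasurable.stronglyMeasurableAtFilter) hfx).const_add _

lemma hasDerivAt_Phi (x : ℝ) : HasDerivAt Phi (phi x) x :=
  hasDerivAt_integral_Iic integrable_phi continuous_phi.continuousAt

lemma exp_mul_phi_sub_div (ε : ℝ) {s : ℝ} (hs : s ≠ 0) :
    exp (-2 * ε) * phi (s - ε / s) = phi (-s - ε / s) := by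
  have hsq : (-s - ε / s) ^ 2 = (s - ε / s) ^ 2 + 4 * ε := by
    field_simp
    ring
  simp only [phi, mul_div_assoc', ← exp_add, hsq]
  ring_nf

/-- `Psi ε t = PsiOfScale ε (√(2t))`. -/
noncomputable def PsiOfScale (ε s : ℝ) : ℝ :=
  1 - Phi (-s - ε / s) - exp (-2 * ε) * Phi (s - ε / s)

lemma hasDerivAt_PsiOfScale (ε : ℝ) {s : ℝ} (hs : s ≠ 0) :
    HasDerivAt (PsiOfScale ε) (-(2 * ε / s ^ 2) * phi (-s - ε / s)) s := by
  have hdiv : HasDerivAt (fun s ↦ ε / s) (-(ε / s ^ 2)) s := by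
    simpa [div_eq_mul_inv, mul_neg] using (hasDerivAt_inv hs).const_mul ε
  have hu := (hasDerivAt_Phi _).comp s ((hasDerivAt_id s).neg.sub hdiv)
  have hv := (hasDerivAt_Phi _).comp s ((hasDerivAt_id s).sub hdiv)
  refine (((hasDerivAt_const s 1).sub hu).sub (hv.const_mul (exp (-2 * ε)))).congr_deriv ?_
  simp only [Pi.sub_apply, Pi.neg_apply, id, ← mul_assoc, exp_mul_phi_sub_div ε hs]
  field_simp
  ring

lemma antitoneOn_PsiOfScale {ε : ℝ} (hε : 0 ≤ ε) : AntitoneOn (PsiOfScale ε) (Ioi 0) := by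
  have hderiv : ∀ s ∈ Ioi (0 : ℝ),
      HasDerivAt (PsiOfScale ε) (-(2 * ε / s ^ 2) * phi (-s - ε / s)) s :=
    fun s hs ↦ hasDerivAt_PsiOfScale ε (ne_of_gt hs)
  refine antitoneOn_of_hasDerivWithinAt_nonpos (f' := fun s ↦ -(2 * ε / s ^ 2) * phi (-s - ε / s))
    (convex_Ioi 0)
    (fun s hs ↦ (hderiv s hs).continuousAt.continuousWithinAt) ?_ ?_ <;> rw [interior_Ioi]
  · exact fun s hs ↦ (hderiv s hs).hasDerivWithinAt
  · exact fun s _ ↦ mul_nonpos_of_nonpos_of_nonneg (neg_nonpos.mpr (by positivity))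
      (by unfold phi; positivity)

/-- For fixed `ε ≥ 0`, the survival probability `t ↦ Psi ε t` is nonincreasing on `(0, ∞)`. -/
theorem Psi_antitone_in_t : ∀ ε : ℝ, 0 ≤ ε →
    AntitoneOn (fun t : ℝ => Psi ε t) (Set.Ioi 0) := by
  intro ε hε
  have hscale : MonotoneOn (fun t : ℝ ↦ √(2 * t)) (Ioi 0) :=
    fun a _ b _ hab ↦ sqrt_le_sqrt (by linarith)
  have hmaps : MapsTo (fun t : ℝ ↦ √(2 * t)) (Ioi 0) (Ioi 0) :=
    fun t (ht : 0 < t) ↦ sqrt_pos.mpr (by positivity)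
  exact (antitoneOn_PsiOfScale hε).comp_MonotoneOn hscale hmaps
end
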